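/- Let (W, 𝒜, P) be a probability space, let μ : W → ℝ be square-integrable with respect to P, and let v : W → ℝ be measurable with v(ω) > 0 for P-almost every ω, with v and log ∘ v both P-integrable and ∫_W v dP > 0. Define the total predictive variance V = ∫_W v dP + Var_P(μ) and the Gaussian entropy function h(t) = 1/2 + (1/2)·log(2πt) for t > 0. Then the information gain, expressed as the difference between the predictive Gaussian entropy and the expected conditional Gaussian entropy, is bounded below: h(V) − ∫_W h(v(ω)) dP(ω) ≥ (1/2)·log( 1 + Var_P(μ) / ∫_W v dP ). -/

import Mathlib

open MeasureTheory ProbabilityTheory Real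

/-!
The Gaussian entropy is affine in `log t`, so the information gain equals
`(1/2) (log V - ∫ log v ∂P)`. Jensen's inequality for the concave `log` gives
`∫ log v ∂P ≤ log ∫ v ∂P`, and `V / ∫ v ∂P = 1 + Var_P(μ) / ∫ v ∂P`.
-/

section LogJensen

variable {α : Type*} [MeasurableSpace α] {P : Measure α} [IsProbabilityMeasure P] {f : α → ℝ}

theorem integral_pos_of_ae_pos (hpos : ∀ᵐ x ∂P, 0 < f x) (hf : Integrable f P) :
    0 < ∫ x, f x ∂P := by
  rw [integral_pos_iff_support_of_nonneg_ae (hpos.mono fun _ hx => hx.le) hf]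
  have hsupport : f.support =ᵐ[P] (Set.univ : Set α) := by
    filter_upwards [hpos] with x hx
    exact propext (iff_of_true hx.ne' trivial)
  simp [measure_congr hsupport]

/-- `log` is not concave on any closed set containing all of `Set.Ioi 0`, so
`ConcaveOn.le_map_integral` does not apply; instead integrate the tangent line at `∫ f ∂P`. -/
theorem integral_log_le_log_integral (hpos : ∀ᵐ x ∂P, 0 < f x) (hf : Integrable f P)
    (hlog : Integrable (fun x => log (f x)) P) :
    ∫ x, log (f x) ∂P ≤ log (∫ x, f x ∂P) := by
  set I := ∫ x, f x ∂P
  have hI : 0 < I := integral_pos_of_ae_pos hpos hf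
  have htangent : ∀ᵐ x ∂P, log (f x) ≤ log I + (f x / I - 1) := by
    filter_upwards [hpos] with x hx
    have := log_le_sub_one_of_pos (div_pos hx hI)
    rw [log_div hx.ne' hI.ne'] at this
    linarith
  have hint : Integrable (fun x => f x / I - 1) P := (hf.div_const I).sub (integrable_const 1)
  calc ∫ x, log (f x) ∂P ≤ ∫ x, (log I + (f x / I - 1)) ∂P :=
        integral_mono_ae hlog ((integrable_const _).add hint) htangent
    _ = log I := by
        rw [integral_add (integrable_const _) hint, integral_sub (hf.div_const I)
          (integrable_const 1), integral_div, div_self hI.ne']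
        simp

end LogJensen

theorem mu_bald_lower_bound_general {W : Type*} [MeasurableSpace W] (P : Measure W)
    [IsProbabilityMeasure P] (μ : W → ℝ)
    (v : W → ℝ) (hvpos : ∀ᵐ ω ∂P, 0 < v ω)
    (hvint : Integrable v P) (hvlog : Integrable (fun ω => Real.log (v ω)) P)
    (V : ℝ) (hV : V = (∫ ω, v ω ∂P) + variance μ P)
    (h : ℝ → ℝ) (hh : ∀ t : ℝ, h t = 1 / 2 + (1 / 2) * Real.log (2 * π * t)) :
    h V - ∫ ω, h (v ω) ∂P ≥ (1 / 2) * Real.log (1 + variance μ P / ∫ ω, v ω ∂P) := by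
  set I := ∫ ω, v ω ∂P
  have hI : 0 < I := integral_pos_of_ae_pos hvpos hvint
  have hVpos : 0 < V := by linarith [variance_nonneg μ P]
  set c := 1 / 2 + 1 / 2 * log (2 * π)
  have hh_log : ∀ t, 0 < t → h t = c + 1 / 2 * log t := fun t ht => by
    rw [hh, log_mul (by positivity) ht.ne']
    ring
  have hint_h : ∫ ω, h (v ω) ∂P = c + 1 / 2 * ∫ ω, log (v ω) ∂P := by
    rw [integral_congr_ae (hvpos.mono fun ω hω => hh_log (v ω) hω),
      integral_add (integrable_const c) (hvlog.const_mul _), integral_const_mul]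
    simp
  calc h V - ∫ ω, h (v ω) ∂P = 1 / 2 * (log V - ∫ ω, log (v ω) ∂P) := by
        rw [hh_log V hVpos, hint_h]
        ring
    _ ≥ 1 / 2 * (log V - log I) := by
        gcongr
        exact integral_log_le_log_integral hvpos hvint hvlog
    _ = 1 / 2 * log (1 + variance μ P / I) := by
        rw [← log_div hVpos.ne' hI.ne', hV, add_div, div_self hI.ne']

/-- μ-BALD lower bound: with total predictive variance `V = ∫ v ∂P + Var_P(μ)` and the Gaussian
entropy `h t = 1/2 + (1/2) log (2πt)`, the information gain `h V - ∫ h (v ω) ∂P` is bounded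
below by `(1/2) log (1 + Var_P(μ) / ∫ v ∂P)`. -/
theorem mu_bald_lower_bound {W : Type*} [MeasurableSpace W] (P : Measure W)
    [IsProbabilityMeasure P] (μ : W → ℝ) (hμ2 : MemLp μ 2 P)
    (v : W → ℝ) (hvm : Measurable v) (hvpos : ∀ᵐ ω ∂P, 0 < v ω)
    (hvint : Integrable v P) (hvlog : Integrable (fun ω => Real.log (v ω)) P)
    (hvI : 0 < ∫ ω, v ω ∂P)
    (V : ℝ) (hV : V = (∫ ω, v ω ∂P) + variance μ P)
    (h : ℝ → ℝ) (hh : ∀ t : ℝ, h t = 1 / 2 + (1 / 2) * Real.log (2 * π * t)) :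
    h V - ∫ ω, h (v ω) ∂P ≥ (1 / 2) * Real.log (1 + variance μ P / ∫ ω, v ω ∂P) :=
  mu_bald_lower_bound_general P μ v hvpos hvint hvlog V hV h hh
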